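/- arXiv:2501.00594 — 2 statements merged into one kernel-verified Lean document; each statement's English description precedes it below -/
import Mathlib

section
/- For q ∈ {1,2,...}, a ≥ 1, b ≥ q/2, and c > 0, the function f(x) = Φ(-x)^{-q} x^{a-1} e^{-bx² - cx} on (0,∞) is integrable: ∫_0^∞ f(x) dx < ∞. -/
/-!
Near `0` the integrand is bounded: `Φ(-x) ≥ Φ(-1) > 0`, `x^{a-1} ≤ 1` and the exponential factor
is at most `1`. For `x ≥ 1`, integrating the Gaussian density over `(-x - 1/x, -x)` gives the
Mills-type bound `Φ(-x) ≥ φ(x) / (e^{3/2} x)` (a cruder form of Feller's), hence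
`Φ(-x)^{-q} ≤ C e^{qx²/2} x^q`. Since `b ≥ q/2` the Gaussian factors cancel, and the integrand is
dominated by the Gamma-type function `C x^{q+a-1} e^{-cx}`.
-/

open MeasureTheory Real Set

/-- The standard normal cumulative distribution function. -/
noncomputable def stdNormalCDF (x : ℝ) : ℝ :=
  ∫ u in Set.Iio x, (Real.sqrt (2 * Real.pi))⁻¹ * Real.exp (-u ^ 2 / 2)

lemma integrable_stdNormal_density :
    Integrable fun u : ℝ => (√(2 * π))⁻¹ * exp (-u ^ 2 / 2) := by
  simpa [ProbabilityTheory.gaussianPDFReal_def] using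
    ProbabilityTheory.integrable_gaussianPDFReal 0 1

lemma stdNormalCDF_nonneg (x : ℝ) : 0 ≤ stdNormalCDF x :=
  setIntegral_nonneg measurableSet_Iio fun _ _ => by positivity

lemma stdNormalCDF_mono : Monotone stdNormalCDF := fun _ _ hxy =>
  setIntegral_mono_set integrable_stdNormal_density.integrableOn
    (ae_of_all _ fun _ => by positivity) (Iio_subset_Iio hxy).eventuallyLE

/-- On `(-x - 1/x, -x)` we have `u² ≤ x² + 3`, so the density there is at least `e^{-3/2} φ(x)`. -/
lemma inv_le_stdNormalCDF_neg {x : ℝ} (hx : 1 ≤ x) :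
    (exp (3 / 2) * √(2 * π) * exp (x ^ 2 / 2) * x)⁻¹ ≤ stdNormalCDF (-x) := by
  have hx0 : 0 < x := one_pos.trans_le hx
  have hdensity : ∀ u ∈ Ioo (-x - x⁻¹) (-x),
      (√(2 * π))⁻¹ * exp (-(x ^ 2 + 3) / 2) ≤ (√(2 * π))⁻¹ * exp (-u ^ 2 / 2) := by
    rintro u ⟨hlo, hhi⟩
    have hxinv : x⁻¹ ≤ 1 := inv_le_one_of_one_le₀ hx
    have hxxinv : x * x⁻¹ = 1 := mul_inv_cancel₀ hx0.ne'
    have hu : u ^ 2 ≤ x ^ 2 + 3 := by nlinarith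
    gcongr
  calc (exp (3 / 2) * √(2 * π) * exp (x ^ 2 / 2) * x)⁻¹
      = (√(2 * π))⁻¹ * exp (-(x ^ 2 + 3) / 2) * volume.real (Ioo (-x - x⁻¹) (-x)) := by
        rw [Real.volume_real_Ioo_of_le (by simp [hx0.le]),
          show -(x ^ 2 + 3) / 2 = -(3 / 2) + -(x ^ 2 / 2) by ring, exp_add, exp_neg, exp_neg]
        field_simp
        ring
    _ ≤ ∫ u in Ioo (-x - x⁻¹) (-x), (√(2 * π))⁻¹ * exp (-u ^ 2 / 2) :=
        setIntegral_ge_of_const_le_real measurableSet_Ioo measure_Ioo_lt_top.ne hdensity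
          integrable_stdNormal_density.integrableOn
    _ ≤ stdNormalCDF (-x) :=
        setIntegral_mono_set integrable_stdNormal_density.integrableOn
          (ae_of_all _ fun _ => by positivity) Ioo_subset_Iio_self.eventuallyLE

lemma stdNormalCDF_neg_rpow_neg_le {q x : ℝ} (hq : 0 ≤ q) (hx : 1 ≤ x) :
    stdNormalCDF (-x) ^ (-q) ≤
      (exp (3 / 2) * √(2 * π)) ^ q * (exp (q * x ^ 2 / 2) * x ^ q) := by
  have hx0 : 0 < x := one_pos.trans_le hx
  calc stdNormalCDF (-x) ^ (-q)
      ≤ (exp (3 / 2) * √(2 * π) * exp (x ^ 2 / 2) * x)⁻¹ ^ (-q) :=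
        rpow_le_rpow_of_nonpos (by positivity) (inv_le_stdNormalCDF_neg hx) (neg_nonpos.2 hq)
    _ = (exp (3 / 2) * √(2 * π)) ^ q * (exp (q * x ^ 2 / 2) * x ^ q) := by
        rw [inv_rpow (by positivity), rpow_neg (by positivity), inv_inv,
          mul_rpow (by positivity) hx0.le, mul_rpow (by positivity) (by positivity), ← exp_mul]
        ring_nf

noncomputable def normalTailKernel (q a b c x : ℝ) : ℝ :=
  stdNormalCDF (-x) ^ (-q) * x ^ (a - 1) * exp (-b * x ^ 2 - c * x)

section normalTailKernel

variable {q a b c : ℝ}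

lemma measurable_normalTailKernel : Measurable (normalTailKernel q a b c) :=
  ((stdNormalCDF_mono.measurable.comp measurable_neg).pow_const _ |>.mul
    (measurable_id.pow_const _)).mul (by fun_prop)

lemma normalTailKernel_nonneg {x : ℝ} (hx : 0 ≤ x) : 0 ≤ normalTailKernel q a b c x := by
  have := stdNormalCDF_nonneg (-x)
  unfold normalTailKernel
  positivity

lemma normalTailKernel_le_of_mem_Ioc (hq : 0 ≤ q) (ha : 1 ≤ a) (hb : 0 ≤ b) (hc : 0 ≤ c)
    {x : ℝ} (hx : x ∈ Ioc 0 1) :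
    normalTailKernel q a b c x ≤ stdNormalCDF (-1) ^ (-q) := by
  obtain ⟨hx0, hx1⟩ := hx
  have hΦ : 0 < stdNormalCDF (-1) := (inv_pos.2 (by positivity)).trans_le
    (inv_le_stdNormalCDF_neg le_rfl)
  have hΦx : stdNormalCDF (-x) ^ (-q) ≤ stdNormalCDF (-1) ^ (-q) :=
    rpow_le_rpow_of_nonpos hΦ (stdNormalCDF_mono (neg_le_neg hx1)) (neg_nonpos.2 hq)
  have hpow : x ^ (a - 1) ≤ 1 := rpow_le_one hx0.le hx1 (by linarith)
  have hexp : exp (-b * x ^ 2 - c * x) ≤ 1 := exp_le_one_iff.2 (by nlinarith)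
  calc normalTailKernel q a b c x ≤ stdNormalCDF (-1) ^ (-q) * 1 * 1 := by
        have := stdNormalCDF_nonneg (-x)
        unfold normalTailKernel
        gcongr
    _ = stdNormalCDF (-1) ^ (-q) := by ring

lemma normalTailKernel_le_of_one_le (hq : 0 ≤ q) (hb : q / 2 ≤ b) {x : ℝ} (hx : 1 ≤ x) :
    normalTailKernel q a b c x ≤
      (exp (3 / 2) * √(2 * π)) ^ q * (x ^ (q + (a - 1)) * exp (-c * x)) := by
  have hx0 : 0 < x := one_pos.trans_le hx
  calc normalTailKernel q a b c x
      ≤ (exp (3 / 2) * √(2 * π)) ^ q * (exp (q * x ^ 2 / 2) * x ^ q) * x ^ (a - 1) *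
          exp (-b * x ^ 2 - c * x) := by
        unfold normalTailKernel
        gcongr
        exact stdNormalCDF_neg_rpow_neg_le hq hx
    _ = (exp (3 / 2) * √(2 * π)) ^ q * (x ^ (q + (a - 1)) *
          exp (-(b - q / 2) * x ^ 2 - c * x)) := by
        have hexp : exp (q * x ^ 2 / 2) * exp (-b * x ^ 2 - c * x) =
            exp (-(b - q / 2) * x ^ 2 - c * x) := by
          rw [← exp_add]
          ring_nf
        rw [rpow_add hx0, ← hexp]
        ring
    _ ≤ (exp (3 / 2) * √(2 * π)) ^ q * (x ^ (q + (a - 1)) * exp (-c * x)) := by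
        gcongr
        nlinarith [sq_nonneg x]

lemma integrableOn_normalTailKernel_Ioc (hq : 0 ≤ q) (ha : 1 ≤ a) (hb : 0 ≤ b)
    (hc : 0 ≤ c) : IntegrableOn (normalTailKernel q a b c) (Ioc 0 1) := by
  refine Measure.integrableOn_of_bounded (M := stdNormalCDF (-1) ^ (-q))
    measure_Ioc_lt_top.ne measurable_normalTailKernel.aestronglyMeasurable ?_
  filter_upwards [ae_restrict_mem measurableSet_Ioc] with x hx
  rw [norm_of_nonneg (normalTailKernel_nonneg hx.1.le)]
  exact normalTailKernel_le_of_mem_Ioc hq ha hb hc hx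

lemma integrableOn_normalTailKernel_Ioi_one (hq : 0 ≤ q) (ha : 1 ≤ a) (hb : q / 2 ≤ b)
    (hc : 0 < c) : IntegrableOn (normalTailKernel q a b c) (Ioi 1) := by
  have hmajorant : IntegrableOn (fun x => x ^ (q + (a - 1)) * exp (-c * x)) (Ioi 0) := by
    simpa using integrableOn_rpow_mul_exp_neg_mul_rpow (p := 1) (by linarith) one_pos hc
  refine ((hmajorant.mono_set (Ioi_subset_Ioi zero_le_one)).const_mul
    ((exp (3 / 2) * √(2 * π)) ^ q)).mono' measurable_normalTailKernel.aestronglyMeasurable ?_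
  filter_upwards [ae_restrict_mem measurableSet_Ioi] with x (hx : 1 < x)
  rw [norm_of_nonneg (normalTailKernel_nonneg (zero_le_one.trans hx.le))]
  exact normalTailKernel_le_of_one_le hq hb hx.le

theorem integrableOn_normalTailKernel (hq : 0 ≤ q) (ha : 1 ≤ a) (hb : q / 2 ≤ b)
    (hc : 0 < c) : IntegrableOn (normalTailKernel q a b c) (Ioi 0) := by
  rw [← Ioc_union_Ioi_eq_Ioi zero_le_one]
  have hb0 : 0 ≤ b := by linarith
  exact (integrableOn_normalTailKernel_Ioc hq ha hb0 hc.le).union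
    (integrableOn_normalTailKernel_Ioi_one hq ha hb hc)

end normalTailKernel

theorem integrable_phi_pow_kernel_general (q : ℕ) (a b c : ℝ)
    (ha : 1 ≤ a) (hb : (q : ℝ) / 2 ≤ b) (hc : 0 < c) :
    IntegrableOn
      (fun x : ℝ => (stdNormalCDF (-x)) ^ (-(q : ℝ)) * x ^ (a - 1) *
        Real.exp (-b * x ^ 2 - c * x))
      (Set.Ioi 0) :=
  integrableOn_normalTailKernel q.cast_nonneg ha hb hc

/-- For `q ≥ 1`, `a ≥ 1`, `b ≥ q/2`, `c > 0`, the function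
`f(x) = Φ(-x)^{-q} x^{a-1} e^{-bx² - cx}` is integrable on `(0,∞)`. -/
theorem integrable_phi_pow_kernel (q : ℕ) (hq : 1 ≤ q) (a b c : ℝ)
    (ha : 1 ≤ a) (hb : (q : ℝ) / 2 ≤ b) (hc : 0 < c) :
    IntegrableOn
      (fun x : ℝ => (stdNormalCDF (-x)) ^ (-(q : ℝ)) * x ^ (a - 1) *
        Real.exp (-b * x ^ 2 - c * x))
      (Set.Ioi 0) :=
  integrable_phi_pow_kernel_general q a b c ha hb hc
end

section
/- For q ∈ {1,2,...}, a ≥ 1, b ≥ q/2, and c > 0, the function f(x) = Φ(-x)^{-q} x^{a-1} e^{-bx² - cx} is log-concave on (0,∞). -/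
/-!
With the Mills ratio `R x = ∫₀^∞ e^{-xu-u²/2} du` one has `Φ(-x) = φ(x) R(x)`, so
`log f = -q log R + (a-1) log x - (b - q/2) x² - c x + const`. As a Laplace transform of a
positive function, `R` is log-convex by Hölder's inequality; the other terms are concave
because `a ≥ 1` and `b ≥ q/2`.
-/

open MeasureTheory Real Set

theorem integral_rpow_mul_rpow_le_of_nonneg {α : Type*} [MeasurableSpace α] {μ : Measure α}
    {f g : α → ℝ} (hf_nonneg : 0 ≤ᵐ[μ] f) (hg_nonneg : 0 ≤ᵐ[μ] g)
    (hf : Integrable f μ) (hg : Integrable g μ) {s t : ℝ} (hs : 0 < s) (ht : 0 < t)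
    (hst : s + t = 1) :
    ∫ a, f a ^ s * g a ^ t ∂μ ≤ (∫ a, f a ∂μ) ^ s * (∫ a, g a ∂μ) ^ t := by
  have memLp_rpow : ∀ {h : α → ℝ}, 0 ≤ᵐ[μ] h → Integrable h μ → ∀ {r : ℝ}, 0 < r →
      MemLp (fun a => h a ^ r) (ENNReal.ofReal (1 / r)) μ := by
    intro h h_nonneg hh r hr
    have := (memLp_one_iff_integrable.mpr hh).norm_rpow_div (ENNReal.ofReal r)
    rw [ENNReal.toReal_ofReal hr.le, one_div, ← ENNReal.ofReal_inv_of_pos hr,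
      ← one_div] at this
    refine this.ae_eq ?_
    filter_upwards [h_nonneg] with a ha
    rw [norm_of_nonneg ha]
  have rpow_inv_rpow : ∀ {h : α → ℝ}, 0 ≤ᵐ[μ] h → ∀ {r : ℝ}, 0 < r →
      ∫ a, (h a ^ r) ^ (1 / r) ∂μ = ∫ a, h a ∂μ := by
    intro h h_nonneg r hr
    refine integral_congr_ae ?_
    filter_upwards [h_nonneg] with a ha
    rw [← rpow_mul ha, mul_one_div_cancel hr.ne', rpow_one]
  have := integral_mul_le_Lp_mul_Lq_of_nonneg (holderConjugate_one_div hs ht hst)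
    (hf_nonneg.mono fun a ha => rpow_nonneg ha s)
    (hg_nonneg.mono fun a ha => rpow_nonneg ha t)
    (memLp_rpow hf_nonneg hf hs) (memLp_rpow hg_nonneg hg ht)
  rwa [rpow_inv_rpow hf_nonneg hs, rpow_inv_rpow hg_nonneg ht, one_div_one_div,
    one_div_one_div] at this

theorem rpow_mul_rpow_le_of_concaveOn_log {E : Type*} [AddCommGroup E] [Module ℝ E]
    {s : Set E} {f : E → ℝ} (hf : ∀ x ∈ s, 0 < f x) (hlog : ConcaveOn ℝ s (log ∘ f))
    {x y : E} (hx : x ∈ s) (hy : y ∈ s) {t : ℝ} (ht : t ∈ Icc 0 1) :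
    f x ^ (1 - t) * f y ^ t ≤ f ((1 - t) • x + t • y) := by
  have hxy : (1 - t) • x + t • y ∈ s :=
    hlog.1 hx hy (sub_nonneg.mpr ht.2) ht.1 (sub_add_cancel 1 t)
  rw [← log_le_log_iff (by have := hf x hx; have := hf y hy; positivity) (hf _ hxy),
    log_mul (rpow_pos_of_pos (hf x hx) _).ne' (rpow_pos_of_pos (hf y hy) _).ne',
    log_rpow (hf x hx), log_rpow (hf y hy)]
  exact hlog.2 hx hy (sub_nonneg.mpr ht.2) ht.1 (sub_add_cancel 1 t)

noncomputable def millsRatio (x : ℝ) : ℝ :=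
  ∫ u in Ioi 0, exp (-x * u - u ^ 2 / 2)

theorem integrable_exp_neg_mul_sub_sq_div_two (x : ℝ) :
    Integrable fun u : ℝ => exp (-x * u - u ^ 2 / 2) := by
  refine (((integrable_exp_neg_mul_sq (b := 1 / 2) (by norm_num)).comp_add_right x).const_mul
    (exp (x ^ 2 / 2))).congr (ae_of_all _ fun u => ?_)
  simp only [← exp_add]
  ring_nf

theorem millsRatio_pos (x : ℝ) : 0 < millsRatio x := by
  have : NeZero (volume.restrict (Ioi (0 : ℝ))) := ⟨by simp⟩
  exact integral_exp_pos (integrable_exp_neg_mul_sub_sq_div_two x).integrableOn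

theorem convexOn_log_millsRatio : ConvexOn ℝ univ (log ∘ millsRatio) := by
  refine convexOn_iff_forall_pos.mpr ⟨convex_univ, fun x _ y _ s t hs ht hst => ?_⟩
  have holder := integral_rpow_mul_rpow_le_of_nonneg
    (μ := volume.restrict (Ioi 0)) (ae_of_all _ fun u => (exp_pos (-x * u - u ^ 2 / 2)).le)
    (ae_of_all _ fun u => (exp_pos (-y * u - u ^ 2 / 2)).le)
    (integrable_exp_neg_mul_sub_sq_div_two x).integrableOn
    (integrable_exp_neg_mul_sub_sq_div_two y).integrableOn hs ht hst
  have mix : ∀ u : ℝ, exp (-x * u - u ^ 2 / 2) ^ s * exp (-y * u - u ^ 2 / 2) ^ t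
      = exp (-(s • x + t • y) * u - u ^ 2 / 2) := fun u => by
    rw [← exp_mul, ← exp_mul, ← exp_add, smul_eq_mul, smul_eq_mul]
    congr 1
    linear_combination (-(u ^ 2 / 2)) * hst
  simp only [mix] at holder
  have hx := millsRatio_pos x
  have hy := millsRatio_pos y
  simp only [Function.comp_apply, smul_eq_mul]
  rw [← log_rpow hx, ← log_rpow hy, ← log_mul (by positivity) (by positivity)]
  exact log_le_log (millsRatio_pos _) holder

theorem stdNormalCDF_neg (x : ℝ) :
    stdNormalCDF (-x) = (√(2 * π))⁻¹ * exp (-x ^ 2 / 2) * millsRatio x := by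
  set φ : ℝ → ℝ := fun u => (√(2 * π))⁻¹ * exp (-u ^ 2 / 2)
  have shift := (measurePreserving_add_right volume x).setIntegral_preimage_emb
    (measurableEmbedding_addRight x) φ (Ioi x)
  have preimage : (· + x) ⁻¹' Ioi x = Ioi 0 := by ext u; simp
  rw [preimage] at shift
  calc stdNormalCDF (-x) = ∫ u in Iic (-x), φ u := integral_Iic_eq_integral_Iio.symm
    _ = ∫ u in Ioi x, φ u := by
      rw [← integral_comp_neg_Ioi]
      simp only [φ, neg_sq]
    _ = ∫ u in Ioi 0, φ (u + x) := shift.symm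
    _ = (√(2 * π))⁻¹ * exp (-x ^ 2 / 2) * millsRatio x := by
      rw [millsRatio, ← integral_const_mul]
      refine setIntegral_congr_fun measurableSet_Ioi fun u _ => ?_
      simp only [φ, mul_assoc, ← exp_add]
      ring_nf

theorem stdNormalCDF_pos (x : ℝ) : 0 < stdNormalCDF x := by
  rw [← neg_neg x, stdNormalCDF_neg]
  have := millsRatio_pos (-x)
  positivity

theorem log_stdNormalCDF_neg (x : ℝ) :
    log (stdNormalCDF (-x)) = log (millsRatio x) - x ^ 2 / 2 - log √(2 * π) := by
  have := millsRatio_pos x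
  rw [stdNormalCDF_neg, log_mul (by positivity) this.ne', log_mul (by positivity) (exp_pos _).ne',
    log_inv, log_exp]
  ring

theorem concaveOn_log_kernel {q a b : ℝ} (hq : 0 ≤ q) (ha : 1 ≤ a) (hb : q / 2 ≤ b) (c : ℝ) :
    ConcaveOn ℝ (Ioi 0) fun x => -q * log (millsRatio x) + (a - 1) * log x
      - (b - q / 2) * x ^ 2 - c * x := by
  have mills := ((convexOn_log_millsRatio.subset (subset_univ _) (convex_Ioi 0)).neg).smul hq
  have log_part := strictConcaveOn_log_Ioi.concaveOn.smul (sub_nonneg.mpr ha)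
  have square := ((even_two.convexOn_pow (𝕜 := ℝ)).subset (subset_univ _)
    (convex_Ioi 0)).neg.smul (sub_nonneg.mpr hb)
  have linear := (LinearMap.mulLeft ℝ (-c)).concaveOn (convex_Ioi (0 : ℝ))
  refine (((mills.add log_part).add square).add linear).congr fun x _ => ?_
  simp only [Pi.add_apply, Pi.neg_apply, Function.comp_apply, smul_eq_mul,
    LinearMap.mulLeft_apply]
  ring

theorem logConcave_phi_pow_kernel_general (q : ℕ) (a b c : ℝ)
    (ha : 1 ≤ a) (hb : (q : ℝ) / 2 ≤ b)
    (f : ℝ → ℝ)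
    (hf : ∀ x : ℝ, f x = (stdNormalCDF (-x)) ^ (-(q : ℝ)) * x ^ (a - 1) *
        Real.exp (-b * x ^ 2 - c * x))
    (x₁ x₂ t : ℝ) (hx₁ : 0 < x₁) (hx₂ : 0 < x₂) (ht : t ∈ Set.Icc (0 : ℝ) 1) :
    f x₁ ^ (1 - t) * f x₂ ^ t ≤ f ((1 - t) * x₁ + t * x₂) := by
  have hf_pos : ∀ x ∈ Ioi (0 : ℝ), 0 < f x := fun x hx => by
    have := stdNormalCDF_pos (-x)
    have : 0 < x := hx
    rw [hf]
    positivity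
  have log_f : EqOn (fun x => -q * log (millsRatio x) + (a - 1) * log x
      - (b - q / 2) * x ^ 2 - c * x + q * log √(2 * π)) (log ∘ f) (Ioi 0) := fun x hx => by
    have hΦ := stdNormalCDF_pos (-x)
    have hx' : 0 < x := hx
    simp only [Function.comp_apply, hf]
    rw [log_mul (by positivity) (exp_pos _).ne', log_mul (by positivity) (by positivity),
      log_rpow hΦ, log_rpow hx', log_exp, log_stdNormalCDF_neg]
    ring
  have concave := ((concaveOn_log_kernel (Nat.cast_nonneg q) ha hb c).add_const _).congr log_f
  simpa only [smul_eq_mul] using rpow_mul_rpow_le_of_concaveOn_log hf_pos concave hx₁ hx₂ ht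

/-- For `q ≥ 1`, `a ≥ 1`, `b ≥ q/2`, `c > 0`, the function
`f(x) = Φ(-x)^{-q} x^{a-1} e^{-bx² - cx}` is log-concave on `(0,∞)`:
`f(x₁)^(1-t) f(x₂)^t ≤ f((1-t)x₁ + t x₂)`. -/
theorem logConcave_phi_pow_kernel (q : ℕ) (hq : 1 ≤ q) (a b c : ℝ)
    (ha : 1 ≤ a) (hb : (q : ℝ) / 2 ≤ b) (hc : 0 < c)
    (f : ℝ → ℝ)
    (hf : ∀ x : ℝ, f x = (stdNormalCDF (-x)) ^ (-(q : ℝ)) * x ^ (a - 1) *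
        Real.exp (-b * x ^ 2 - c * x))
    (x₁ x₂ t : ℝ) (hx₁ : 0 < x₁) (hx₂ : 0 < x₂) (ht : t ∈ Set.Icc (0 : ℝ) 1) :
    f x₁ ^ (1 - t) * f x₂ ^ t ≤ f ((1 - t) * x₁ + t * x₂) :=
  logConcave_phi_pow_kernel_general q a b c ha hb f hf x₁ x₂ t hx₁ hx₂ ht
end
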